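/- arXiv:1607.05104 — 3 statements merged into one kernel-verified Lean document; each statement's English description precedes it below -/
import Mathlib

section
/- If f : I → ℝ is convex on an interval I ⊆ ℝ and a, b ∈ I with a < b, then f((a+b)/2) ≤ (1/(b-a)) ∫_a^b f(x) dx ≤ (f(a)+f(b))/2 (Hermite–Hadamard inequality). -/
/-!
Replace `f` by its symmetrization `g x = (f x + f (a + b - x)) / 2`, which has the same integral
over `[a, b]`. Convexity squeezes `g` pointwise: `f ((a + b) / 2) ≤ g x` is midpoint convexity at
`x` and `a + b - x`, and `g x ≤ (f a + f b) / 2` is the sum of the chord bounds at `x` and at its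
reflection. Averaging these constant bounds over `[a, b]` gives both inequalities.
-/

open MeasureTheory Set

theorem ConvexOn.map_add_map_add_sub_le {𝕜 E β : Type*} [CommRing 𝕜] [PartialOrder 𝕜]
    [AddCommGroup E] [Module 𝕜 E] [AddCommGroup β] [PartialOrder β] [IsOrderedAddMonoid β]
    [Module 𝕜 β] {s : Set E} {f : E → β} (hf : ConvexOn 𝕜 s f) {a b x : E}
    (ha : a ∈ s) (hb : b ∈ s) (hx : x ∈ segment 𝕜 a b) :
    f x + f (a + b - x) ≤ f a + f b := by
  obtain ⟨p, q, hp, hq, hpq, rfl⟩ := hx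
  obtain rfl : p = 1 - q := eq_sub_of_add_eq hpq
  have hreflect : a + b - ((1 - q) • a + q • b) = q • a + (1 - q) • b := by module
  calc f ((1 - q) • a + q • b) + f (a + b - ((1 - q) • a + q • b))
      ≤ ((1 - q) • f a + q • f b) + (q • f a + (1 - q) • f b) := by
        rw [hreflect]
        exact add_le_add (hf.2 ha hb hp hq hpq) (hf.2 ha hb hq hp (by rw [add_comm, hpq]))
    _ = f a + f b := by module

theorem ConvexOn.map_add_div_two_le {𝕜 : Type*} [Field 𝕜] [LinearOrder 𝕜] [IsStrictOrderedRing 𝕜]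
    {s : Set 𝕜} {f : 𝕜 → 𝕜} (hf : ConvexOn 𝕜 s f) {x y : 𝕜} (hx : x ∈ s) (hy : y ∈ s) :
    f ((x + y) / 2) ≤ (f x + f y) / 2 := by
  have h := hf.2 hx hy (by norm_num : (0 : 𝕜) ≤ 1 / 2) (by norm_num : (0 : 𝕜) ≤ 1 / 2)
    (by norm_num)
  simp only [smul_eq_mul] at h
  convert h using 2 <;> ring

theorem intervalIntegral.integral_comp_add_sub {E : Type*} [NormedAddCommGroup E]
    [NormedSpace ℝ E] (f : ℝ → E) (a b : ℝ) :
    ∫ x in a..b, f (a + b - x) = ∫ x in a..b, f x := by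
  simp [intervalIntegral.integral_comp_sub_left]

theorem intervalIntegral.le_inv_mul_integral_of_forall_le {f : ℝ → ℝ} {a b m : ℝ} (hab : a < b)
    (hf : IntervalIntegrable f volume a b) (h : ∀ x ∈ Icc a b, m ≤ f x) :
    m ≤ (b - a)⁻¹ * ∫ x in a..b, f x := by
  rw [le_inv_mul_iff₀ (sub_pos.2 hab)]
  simpa using intervalIntegral.integral_mono_on hab.le intervalIntegrable_const hf h

theorem intervalIntegral.inv_mul_integral_le_of_forall_le {f : ℝ → ℝ} {a b M : ℝ} (hab : a < b)
    (hf : IntervalIntegrable f volume a b) (h : ∀ x ∈ Icc a b, f x ≤ M) :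
    (b - a)⁻¹ * ∫ x in a..b, f x ≤ M := by
  rw [inv_mul_le_iff₀ (sub_pos.2 hab)]
  simpa using intervalIntegral.integral_mono_on hab.le hf intervalIntegrable_const h

theorem hermite_hadamard
    (I : Set ℝ) (f : ℝ → ℝ) (hf : ConvexOn ℝ I f)
    (a b : ℝ) (ha : a ∈ I) (hb : b ∈ I) (hab : a < b)
    (hint : IntervalIntegrable f volume a b) :
    f ((a + b) / 2) ≤ (1 / (b - a)) * ∫ x in a..b, f x ∧
      (1 / (b - a)) * ∫ x in a..b, f x ≤ (f a + f b) / 2 := by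
  have hsegment : segment ℝ a b = Icc a b := segment_eq_Icc hab.le
  have hIcc : Icc a b ⊆ I := hsegment ▸ hf.1.segment_subset ha hb
  have hreflect : ∀ x ∈ Icc a b, a + b - x ∈ Icc a b := fun x hx =>
    ⟨by linarith [hx.2], by linarith [hx.1]⟩
  have hint_reflect : IntervalIntegrable (fun x => f (a + b - x)) volume a b := by
    simpa using (hint.comp_sub_left (a + b)).symm
  have hsym_int : IntervalIntegrable (fun x => (f x + f (a + b - x)) / 2) volume a b :=
    (hint.add hint_reflect).div_const 2
  have hsym_integral : ∫ x in a..b, (f x + f (a + b - x)) / 2 = ∫ x in a..b, f x := by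
    rw [intervalIntegral.integral_div, intervalIntegral.integral_add hint hint_reflect,
      intervalIntegral.integral_comp_add_sub, add_self_div_two]
  rw [one_div, ← hsym_integral]
  constructor
  · refine intervalIntegral.le_inv_mul_integral_of_forall_le hab hsym_int fun x hx => ?_
    have hmid := hf.map_add_div_two_le (hIcc hx) (hIcc (hreflect x hx))
    rwa [add_sub_cancel] at hmid
  · refine intervalIntegral.inv_mul_integral_le_of_forall_le hab hsym_int fun x hx => ?_
    have hchord := hf.map_add_map_add_sub_le ha hb (hsegment ▸ hx)
    linarith
end

section
/- For any α > 0 and λ ∈ [0,1], ∫_0^1 |t(λ - t^α)| dt = (α·λ^{1+2/α} + 1)/(α+2) - λ/2. -/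
open intervalIntegral Set

theorem A1_value (α lam : ℝ) (hα : 0 < α) (hlam : lam ∈ Icc (0:ℝ) 1) :
    ∫ t in (0:ℝ)..1, |t * (lam - t ^ α)| =
      (α * lam ^ (1 + 2 / α) + 1) / (α + 2) - lam / 2 := by
  obtain ⟨hl0, hl1⟩ := hlam
  set c : ℝ := lam ^ (α⁻¹) with hcdef
  have hc0 : 0 ≤ c := Real.rpow_nonneg hl0 _
  have hc1 : c ≤ 1 := Real.rpow_le_one hl0 hl1 (by positivity)
  have hca : c ^ α = lam := Real.rpow_inv_rpow hl0 hα.ne'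
  have hrc : Continuous fun t : ℝ => t ^ α :=
    continuous_iff_continuousAt.mpr fun x =>
      Real.continuousAt_rpow_const x α (Or.inr hα.le)
  have hcont : Continuous fun t : ℝ => |t * (lam - t ^ α)| :=
    (continuous_id.mul (continuous_const.sub hrc)).abs
  have hsplit : ∫ t in (0:ℝ)..1, |t * (lam - t ^ α)| =
      (∫ t in (0:ℝ)..c, |t * (lam - t ^ α)|) +
      ∫ t in c..1, |t * (lam - t ^ α)| := by
    rw [integral_add_adjacent_intervals (hcont.intervalIntegrable _ _)
      (hcont.intervalIntegrable _ _)]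
  have h1 : (∫ t in (0:ℝ)..c, |t * (lam - t ^ α)|) =
      ∫ t in (0:ℝ)..c, lam * t - t ^ (α + 1) := by
    apply integral_congr
    intro t ht
    rw [uIcc_of_le hc0] at ht
    have ht0 : 0 ≤ t := ht.1
    have hta : t ^ α ≤ lam := by
      rw [← hca]; exact Real.rpow_le_rpow ht0 ht.2 hα.le
    show |t * (lam - t ^ α)| = lam * t - t ^ (α + 1)
    rw [abs_of_nonneg (by nlinarith [Real.rpow_nonneg ht0 α])]
    rw [Real.rpow_add' ht0 (by positivity), Real.rpow_one]
    ring
  have h2 : (∫ t in c..1, |t * (lam - t ^ α)|) =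
      ∫ t in c..1, t ^ (α + 1) - lam * t := by
    apply integral_congr
    intro t ht
    rw [uIcc_of_le hc1] at ht
    have ht0 : 0 ≤ t := le_trans hc0 ht.1
    have hta : lam ≤ t ^ α := by
      rw [← hca]; exact Real.rpow_le_rpow hc0 ht.1 hα.le
    show |t * (lam - t ^ α)| = t ^ (α + 1) - lam * t
    rw [abs_of_nonpos (by nlinarith)]
    rw [Real.rpow_add' ht0 (by positivity), Real.rpow_one]
    ring
  have hint1 : IntervalIntegrable (fun t : ℝ => lam * t) MeasureTheory.volume 0 c :=
    (continuous_const.mul continuous_id).intervalIntegrable _ _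
  have hint1' : IntervalIntegrable (fun t : ℝ => lam * t) MeasureTheory.volume c 1 :=
    (continuous_const.mul continuous_id).intervalIntegrable _ _
  have hintr : ∀ a b : ℝ, IntervalIntegrable (fun t : ℝ => t ^ (α + 1))
      MeasureTheory.volume a b := fun a b =>
    intervalIntegral.intervalIntegrable_rpow (Or.inl (by positivity))
  have hrpow : ∀ a b : ℝ, (∫ t in a..b, t ^ (α + 1)) =
      (b ^ (α + 2) - a ^ (α + 2)) / (α + 2) := by
    intro a b
    rw [integral_rpow (Or.inl (by linarith))]
    ring_nf
  have hlin : ∀ a b : ℝ, (∫ t in a..b, lam * t) = lam * (b ^ 2 - a ^ 2) / 2 := by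
    intro a b
    rw [integral_const_mul, integral_id]
    ring
  have hexp : α⁻¹ * (α + 2) = 1 + 2 / α := by
    field_simp
  have hL1 : c ^ (α + 2) = lam ^ (1 + 2 / α) := by
    rw [hcdef, ← Real.rpow_mul hl0, hexp]
  have hne : (1 : ℝ) + 2 / α ≠ 0 := by positivity
  have hL2 : lam * c ^ 2 = lam ^ (1 + 2 / α) := by
    have h2r : c ^ (2:ℕ) = lam ^ (2 / α) := by
      rw [← Real.rpow_natCast c 2, hcdef, ← Real.rpow_mul hl0]
      norm_num
      rw [show α⁻¹ * 2 = 2 / α by ring]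
    rw [h2r, Real.rpow_add' hl0 hne, Real.rpow_one]
  have h0p : (0:ℝ) ^ (α + 2) = 0 := Real.zero_rpow (by positivity)
  have h1p : (1:ℝ) ^ (α + 2) = 1 := Real.one_rpow _
  have hd : α + 2 ≠ 0 := by linarith
  rw [hsplit, h1, h2, integral_sub hint1 (hintr 0 c), integral_sub (hintr c 1) hint1',
    hrpow, hrpow, hlin, hlin, h0p, h1p, hL1, ← hL2]
  field_simp
  ring
end

section
/- For any α > 0 and λ ∈ [0,1], ∫_0^1 |t(λ - t^α)|·t dt = (3 - (α+3)λ + 2α·λ^{1+3/α}) / (3(α+3)). -/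
open intervalIntegral Set

/-!
Put `c = λ^(1/α)`. The integrand `t (λ - t^α) t` is nonnegative on `[0, c]` and nonpositive on
`[c, 1]`, so `∫₀¹ |g| = 2 ∫₀ᶜ g - ∫₀¹ g`, and both integrals of `g` are elementary:
`∫₀ᵇ g = λ b³/3 - b^(α+3)/(α+3)`. At `b = c` both terms are multiples of
`λ^(1+3/α) = c^(α+3) = λ c³`.
-/

theorem integral_abs_eq_of_sign_change {f : ℝ → ℝ} {a b c : ℝ}
    (hac : a ≤ c) (hcb : c ≤ b) (hf : IntervalIntegrable f MeasureTheory.volume a b)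
    (hpos : ∀ t ∈ Icc a c, 0 ≤ f t) (hneg : ∀ t ∈ Icc c b, f t ≤ 0) :
    ∫ t in a..b, |f t| = 2 * (∫ t in a..c, f t) - ∫ t in a..b, f t := by
  have hf_ac : IntervalIntegrable f MeasureTheory.volume a c :=
    hf.mono_set (uIcc_subset_uIcc_left (by simp [uIcc_of_le (hac.trans hcb), hac, hcb]))
  have hf_cb : IntervalIntegrable f MeasureTheory.volume c b :=
    hf.mono_set
      (uIcc_subset_uIcc_right (by simp [uIcc_of_le (hac.trans hcb), hac, hcb]))
  have habs_ac : ∫ t in a..c, |f t| = ∫ t in a..c, f t :=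
    integral_congr fun t ht => abs_of_nonneg (hpos t (by rwa [uIcc_of_le hac] at ht))
  have habs_cb : ∫ t in c..b, |f t| = -∫ t in c..b, f t := by
    rw [← integral_neg]
    exact integral_congr fun t ht => abs_of_nonpos (hneg t (by rwa [uIcc_of_le hcb] at ht))
  have := integral_add_adjacent_intervals hf_ac.abs hf_cb.abs
  have := integral_add_adjacent_intervals hf_ac hf_cb
  linarith

theorem integral_mul_sub_rpow_mul {α : ℝ} (hα : -2 < α) (lam : ℝ) {b : ℝ} (hb : 0 ≤ b) :
    ∫ t in (0:ℝ)..b, t * (lam - t ^ α) * t = lam * b ^ 3 / 3 - b ^ (α + 3) / (α + 3) := by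
  have hα2 : -1 < α + 2 := by linarith
  have hpoly : ∫ t in (0:ℝ)..b, t * (lam - t ^ α) * t
      = ∫ t in (0:ℝ)..b, (lam * t ^ 2 - t ^ (α + 2)) := by
    refine integral_congr fun t ht => ?_
    have ht0 : 0 ≤ t := by rw [uIcc_of_le hb] at ht; exact ht.1
    rw [Real.rpow_add' ht0 (by linarith), Real.rpow_two]
    ring
  rw [hpoly, integral_sub ((intervalIntegrable_pow 2).const_mul lam)
      (intervalIntegrable_rpow' hα2),
    integral_const_mul, integral_pow, integral_rpow (Or.inl hα2),
    show α + 2 + 1 = α + 3 by ring, Real.zero_rpow (by linarith)]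
  ring

theorem rpow_inv_rpow_add_three {α lam : ℝ} (hα : α ≠ 0) (hl : 0 ≤ lam) :
    (lam ^ α⁻¹) ^ (α + 3) = lam ^ (1 + 3 / α) := by
  rw [← Real.rpow_mul hl]
  field_simp

theorem mul_rpow_inv_pow_three {α lam : ℝ} (hα : 0 < α) (hl : 0 ≤ lam) :
    lam * (lam ^ α⁻¹) ^ 3 = lam ^ (1 + 3 / α) := by
  rw [← Real.rpow_natCast, ← Real.rpow_mul hl, Real.rpow_add' hl (by positivity),
    Real.rpow_one, Nat.cast_ofNat, ← div_eq_inv_mul]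

theorem A2_value (α lam : ℝ) (hα : 0 < α) (hlam : lam ∈ Icc (0:ℝ) 1) :
    ∫ t in (0:ℝ)..1, |t * (lam - t ^ α)| * t =
      (3 - (α + 3) * lam + 2 * α * lam ^ (1 + 3 / α)) / (3 * (α + 3)) := by
  obtain ⟨hl0, hl1⟩ := hlam
  set c := lam ^ α⁻¹
  have hc0 : 0 ≤ c := Real.rpow_nonneg hl0 _
  have hc1 : c ≤ 1 := Real.rpow_le_one hl0 hl1 (inv_nonneg.mpr hα.le)
  have hcα : c ^ α = lam := Real.rpow_inv_rpow hl0 hα.ne'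
  have hcont : Continuous fun t : ℝ => t * (lam - t ^ α) * t := by
    have := Real.continuous_rpow_const (q := α) hα.le
    fun_prop
  have hpos : ∀ t ∈ Icc 0 c, 0 ≤ t * (lam - t ^ α) * t := fun t ⟨ht0, htc⟩ => by
    have : t ^ α ≤ lam := hcα ▸ Real.rpow_le_rpow ht0 htc hα.le
    exact mul_nonneg (mul_nonneg ht0 (sub_nonneg.2 this)) ht0
  have hneg : ∀ t ∈ Icc c 1, t * (lam - t ^ α) * t ≤ 0 := fun t ⟨hct, _⟩ => by
    have : lam ≤ t ^ α := hcα ▸ Real.rpow_le_rpow hc0 hct hα.le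
    have ht0 : 0 ≤ t := hc0.trans hct
    exact mul_nonpos_of_nonpos_of_nonneg
      (mul_nonpos_of_nonneg_of_nonpos ht0 (sub_nonpos.2 this)) ht0
  calc ∫ t in (0:ℝ)..1, |t * (lam - t ^ α)| * t
      = ∫ t in (0:ℝ)..1, |t * (lam - t ^ α) * t| := by
        refine integral_congr fun t ht => ?_
        rw [uIcc_of_le zero_le_one] at ht
        rw [abs_mul _ t, abs_of_nonneg ht.1]
    _ = 2 * (∫ t in (0:ℝ)..c, t * (lam - t ^ α) * t)
          - ∫ t in (0:ℝ)..1, t * (lam - t ^ α) * t :=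
        integral_abs_eq_of_sign_change hc0 hc1 (hcont.intervalIntegrable _ _) hpos hneg
    _ = 2 * (lam * c ^ 3 / 3 - c ^ (α + 3) / (α + 3)) - (lam / 3 - 1 / (α + 3)) := by
        rw [integral_mul_sub_rpow_mul (by linarith) lam hc0,
          integral_mul_sub_rpow_mul (by linarith) lam zero_le_one, one_pow, Real.one_rpow,
          mul_one]
    _ = (3 - (α + 3) * lam + 2 * α * lam ^ (1 + 3 / α)) / (3 * (α + 3)) := by
        rw [rpow_inv_rpow_add_three hα.ne' hl0, mul_rpow_inv_pow_three hα hl0]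
        field_simp
        ring
end
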